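/- arXiv:1907.02135 — 8 statements merged into one kernel-verified Lean document; each statement's English description precedes it below -/
import Mathlib

section
/- There exists a unique F-algebra homomorphism ♮ : ℜ → F[a,b,c] ⊗ U(sl₂) that sends A ↦ a(a+1)⊗1 + (b−c−a)⊗x + (a+b−c+1)⊗y − 1⊗xy, B ↦ b(b+1)⊗1 + (c−a−b)⊗y + (b+c−a+1)⊗z − 1⊗yz, C ↦ c(c+1)⊗1 + (a−b−c)⊗z + (c+a−b+1)⊗x − 1⊗zx, and D ↦ 1⊗(zyx+zx) + (c+b(c+a−b))⊗x + (a+c(a+b−c))⊗y + (b+a(b+c−a))⊗z + (b−c)⊗xy + (c−a)⊗yz + (a−b)⊗zx. -/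
open scoped TensorProduct

noncomputable section

namespace RacahPaper

variable (F : Type) [Field F]

/-- Defining relations of `U(sl₂)`: generators `e = ι 0`, `f = ι 1`, `h = ι 2` with
`he - eh = 2e`, `hf - fh = -2f`, `ef - fe = h`. -/
inductive slRel : FreeAlgebra F (Fin 3) → FreeAlgebra F (Fin 3) → Prop
  | he : slRel (FreeAlgebra.ι F 2 * FreeAlgebra.ι F 0 - FreeAlgebra.ι F 0 * FreeAlgebra.ι F 2)
      (2 * FreeAlgebra.ι F 0)
  | hf : slRel (FreeAlgebra.ι F 2 * FreeAlgebra.ι F 1 - FreeAlgebra.ι F 1 * FreeAlgebra.ι F 2)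
      (-(2 * FreeAlgebra.ι F 1))
  | ef : slRel (FreeAlgebra.ι F 0 * FreeAlgebra.ι F 1 - FreeAlgebra.ι F 1 * FreeAlgebra.ι F 0)
      (FreeAlgebra.ι F 2)

/-- The universal enveloping algebra `U(sl₂)`. -/
abbrev U := RingQuot (slRel F)

/-- The generator `e` of `U(sl₂)`. -/
def e : U F := RingQuot.mkAlgHom F (slRel F) (FreeAlgebra.ι F 0)

/-- The generator `f` of `U(sl₂)`. -/
def f : U F := RingQuot.mkAlgHom F (slRel F) (FreeAlgebra.ι F 1)

/-- The generator `h` of `U(sl₂)`. -/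
def h : U F := RingQuot.mkAlgHom F (slRel F) (FreeAlgebra.ι F 2)

/-- The equitable generator `x = -f - h/2`. -/
def ux : U F := -f F - (2 : F)⁻¹ • h F

/-- The equitable generator `y = h/2`. -/
def uy : U F := (2 : F)⁻¹ • h F

/-- The equitable generator `z = e - h/2`. -/
def uz : U F := e F - (2 : F)⁻¹ • h F

/-- The normalized Casimir element `Λ = ef + h(h-2)/4` of `U(sl₂)`. -/
def Lam : U F := e F * f F + (4 : F)⁻¹ • (h F * (h F - 2))

/-- `ν_x = f/2`. -/
def nux : U F := (2 : F)⁻¹ • f F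

/-- `ν_z = e/2`. -/
def nuz : U F := (2 : F)⁻¹ • e F

/-- `U_n`: the span of the `e^i h^j f^k` with `k - i = n`. -/
def Usub (n : ℤ) : Submodule F (U F) :=
  Submodule.span F {u : U F | ∃ i j k : ℕ, (k : ℤ) - (i : ℤ) = n ∧ u = e F ^ i * h F ^ j * f F ^ k}

-- Racah algebra
/-- Generator `A` of the free algebra. -/
def fA : FreeAlgebra F (Fin 4) := FreeAlgebra.ι F 0
/-- Generator `B` of the free algebra. -/
def fB : FreeAlgebra F (Fin 4) := FreeAlgebra.ι F 1
/-- Generator `C` of the free algebra. -/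
def fC : FreeAlgebra F (Fin 4) := FreeAlgebra.ι F 2
/-- Generator `D` of the free algebra. -/
def fD : FreeAlgebra F (Fin 4) := FreeAlgebra.ι F 3

/-- `α = [A,D] + AC - BA` in the free algebra. -/
def falpha : FreeAlgebra F (Fin 4) := (fA F * fD F - fD F * fA F) + fA F * fC F - fB F * fA F
/-- `β = [B,D] + BA - CB` in the free algebra. -/
def fbeta : FreeAlgebra F (Fin 4) := (fB F * fD F - fD F * fB F) + fB F * fA F - fC F * fB F
/-- `γ = [C,D] + CB - AC` in the free algebra. -/
def fgamma : FreeAlgebra F (Fin 4) := (fC F * fD F - fD F * fC F) + fC F * fB F - fA F * fC F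

/-- Defining relations of the Racah algebra: `[A,B] = [B,C] = [C,A] = 2D` and each of
`α, β, γ` commutes with each of the generators `A, B, C, D`. -/
inductive racahRel : FreeAlgebra F (Fin 4) → FreeAlgebra F (Fin 4) → Prop
  | AB : racahRel (fA F * fB F - fB F * fA F) (2 * fD F)
  | BC : racahRel (fB F * fC F - fC F * fB F) (2 * fD F)
  | CA : racahRel (fC F * fA F - fA F * fC F) (2 * fD F)
  | calpha (i : Fin 4) : racahRel (falpha F * FreeAlgebra.ι F i) (FreeAlgebra.ι F i * falpha F)
  | cbeta (i : Fin 4) : racahRel (fbeta F * FreeAlgebra.ι F i) (FreeAlgebra.ι F i * fbeta F)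
  | cgamma (i : Fin 4) : racahRel (fgamma F * FreeAlgebra.ι F i) (FreeAlgebra.ι F i * fgamma F)

/-- The Racah algebra `ℜ`. -/
abbrev Racah := RingQuot (racahRel F)

/-- Generator `A` of the Racah algebra. -/
def A : Racah F := RingQuot.mkAlgHom F (racahRel F) (fA F)
/-- Generator `B` of the Racah algebra. -/
def B : Racah F := RingQuot.mkAlgHom F (racahRel F) (fB F)
/-- Generator `C` of the Racah algebra. -/
def C : Racah F := RingQuot.mkAlgHom F (racahRel F) (fC F)
/-- Generator `D` of the Racah algebra. -/
def D : Racah F := RingQuot.mkAlgHom F (racahRel F) (fD F)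

/-- `α = [A,D] + AC - BA` in the Racah algebra. -/
def alpha : Racah F := (A F * D F - D F * A F) + A F * C F - B F * A F
/-- `β = [B,D] + BA - CB` in the Racah algebra. -/
def beta : Racah F := (B F * D F - D F * B F) + B F * A F - C F * B F
/-- `γ = [C,D] + CB - AC` in the Racah algebra. -/
def gamma : Racah F := (C F * D F - D F * C F) + C F * B F - A F * C F
/-- `δ = A + B + C` in the Racah algebra. -/
def delta : Racah F := A F + B F + C F

/-- `Ω_A = D² + (BAC + CAB)/2 + A² + Bγ - Cβ - Aδ`. -/
def OmegaA : Racah F :=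
  D F ^ 2 + (2 : F)⁻¹ • (B F * A F * C F + C F * A F * B F) + A F ^ 2
    + B F * gamma F - C F * beta F - A F * delta F

/-- `Ω_B = D² + (CBA + ABC)/2 + B² + Cα - Aγ - Bδ`. -/
def OmegaB : Racah F :=
  D F ^ 2 + (2 : F)⁻¹ • (C F * B F * A F + A F * B F * C F) + B F ^ 2
    + C F * alpha F - A F * gamma F - B F * delta F

/-- `Ω_C = D² + (ACB + BCA)/2 + C² + Aβ - Bα - Cδ`. -/
def OmegaC : Racah F :=
  D F ^ 2 + (2 : F)⁻¹ • (A F * C F * B F + B F * C F * A F) + C F ^ 2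
    + A F * beta F - B F * alpha F - C F * delta F

-- the tensor algebra F[a,b,c] ⊗ U(sl2)
/-- The polynomial algebra `F[a,b,c]`. -/
abbrev P := MvPolynomial (Fin 3) F

/-- The tensor product algebra `F[a,b,c] ⊗ U(sl₂)`. -/
abbrev T := P F ⊗[F] U F

/-- The indeterminate `a`. -/
def pa : P F := MvPolynomial.X 0
/-- The indeterminate `b`. -/
def pb : P F := MvPolynomial.X 1
/-- The indeterminate `c`. -/
def pc : P F := MvPolynomial.X 2

/-- `A♮`. -/
def Anat : T F :=
  (pa F * (pa F + 1)) ⊗ₜ[F] (1 : U F) + (pb F - pc F - pa F) ⊗ₜ[F] ux F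
    + (pa F + pb F - pc F + 1) ⊗ₜ[F] uy F - (1 : P F) ⊗ₜ[F] (ux F * uy F)

/-- `B♮`. -/
def Bnat : T F :=
  (pb F * (pb F + 1)) ⊗ₜ[F] (1 : U F) + (pc F - pa F - pb F) ⊗ₜ[F] uy F
    + (pb F + pc F - pa F + 1) ⊗ₜ[F] uz F - (1 : P F) ⊗ₜ[F] (uy F * uz F)

/-- `C♮`. -/
def Cnat : T F :=
  (pc F * (pc F + 1)) ⊗ₜ[F] (1 : U F) + (pa F - pb F - pc F) ⊗ₜ[F] uz F
    + (pc F + pa F - pb F + 1) ⊗ₜ[F] ux F - (1 : P F) ⊗ₜ[F] (uz F * ux F)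

/-- `D♮`. -/
def Dnat : T F :=
  (1 : P F) ⊗ₜ[F] (uz F * uy F * ux F + uz F * ux F)
    + (pc F + pb F * (pc F + pa F - pb F)) ⊗ₜ[F] ux F
    + (pa F + pc F * (pa F + pb F - pc F)) ⊗ₜ[F] uy F
    + (pb F + pa F * (pb F + pc F - pa F)) ⊗ₜ[F] uz F
    + (pb F - pc F) ⊗ₜ[F] (ux F * uy F)
    + (pc F - pa F) ⊗ₜ[F] (uy F * uz F)
    + (pa F - pb F) ⊗ₜ[F] (uz F * ux F)

/-- `R = 2 ⊗ yν_x + 2(c+a-b+1) ⊗ ν_x`. -/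
def Rel : T F :=
  (2 : P F) ⊗ₜ[F] (uy F * nux F) + (2 * (pc F + pa F - pb F + 1)) ⊗ₜ[F] nux F

/-- `L = -2 ⊗ yν_z - 2(a-b-c-1) ⊗ ν_z`. -/
def Lel : T F :=
  -((2 : P F) ⊗ₜ[F] (uy F * nuz F)) - (2 * (pa F - pb F - pc F - 1)) ⊗ₜ[F] nuz F

/-- `θ = 1⊗y - b⊗1`. -/
def theta : T F := (1 : P F) ⊗ₜ[F] uy F - pb F ⊗ₜ[F] (1 : U F)

/-- `ϑ = 1⊗y + a⊗1`. -/
def vartheta : T F := (1 : P F) ⊗ₜ[F] uy F + pa F ⊗ₜ[F] (1 : U F)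

/-- `F[a,b,c] ⊗ U_n` as a subspace of `F[a,b,c] ⊗ U(sl₂)`. -/
def TU (n : ℤ) : Submodule F (T F) :=
  Submodule.span F {t : T F | ∃ (p : P F) (u : U F), u ∈ Usub F n ∧ t = p ⊗ₜ[F] u}


lemma umul_neg (a b : U F) : a * -b = -(a * b) := by with_unfolding_all exact mul_neg a b
lemma uneg_mul (a b : U F) : -a * b = -(a * b) := by with_unfolding_all exact neg_mul a b
lemma uneg_neg (a : U F) : - -a = a := by with_unfolding_all exact neg_neg a
lemma usmul_neg (s : F) (a : U F) : s • -a = -(s • a) := by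
  with_unfolding_all exact smul_neg s a
lemma uneg_add (a b : U F) : -(a + b) = -a + -b := by with_unfolding_all exact neg_add a b
lemma uneg_sub (a b : U F) : -(a - b) = b - a := by with_unfolding_all exact neg_sub a b

lemma two_smul_U (u : U F) : (2 : F) • u = 2 * u := by
  rw [Algebra.smul_def, map_ofNat]

lemma rel_ef : e F * f F = f F * e F + h F := by
  have h1 : e F * f F - f F * e F = h F := by
    simpa only [e, f, h, map_mul, map_sub] using RingQuot.mkAlgHom_rel F (slRel.ef (F := F))
  rw [← h1]; abel

lemma rel_he : h F * e F = e F * h F + (2 : F) • e F := by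
  have h1 : h F * e F - e F * h F = 2 * e F := by
    simpa only [e, h, map_mul, map_sub, map_ofNat]
      using RingQuot.mkAlgHom_rel F (slRel.he (F := F))
  rw [two_smul_U, ← h1]; abel

lemma rel_hf : h F * f F = f F * h F - (2 : F) • f F := by
  have h1 : h F * f F - f F * h F = -(2 * f F) := by
    simpa only [f, h, map_mul, map_sub, map_neg, map_ofNat]
      using RingQuot.mkAlgHom_rel F (slRel.hf (F := F))
  rw [two_smul_U, sub_eq_add_neg, ← h1]; abel

lemma uyx (hchar : (2 : F) ≠ 0) : uy F * ux F = ux F * uy F - ux F - uy F := by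
  simp only [ux, uy, mul_sub, sub_mul, mul_add, add_mul, umul_neg, uneg_mul, smul_mul_assoc,
    mul_smul_comm, smul_smul, usmul_neg, uneg_neg, smul_sub, smul_add, rel_hf]
  match_scalars <;> (field_simp; try ring)

lemma uzy (hchar : (2 : F) ≠ 0) : uz F * uy F = uy F * uz F - uy F - uz F := by
  simp only [ux, uy, uz, mul_sub, sub_mul, mul_add, add_mul, umul_neg, uneg_mul, smul_mul_assoc,
    mul_smul_comm, smul_smul, usmul_neg, uneg_neg, smul_sub, smul_add, rel_he]
  match_scalars <;> (field_simp; try ring)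

lemma uzx (hchar : (2 : F) ≠ 0) : uz F * ux F = ux F * uz F + uz F + ux F := by
  simp only [ux, uy, uz, mul_sub, sub_mul, mul_add, add_mul, umul_neg, uneg_mul, smul_mul_assoc,
    mul_smul_comm, smul_smul, usmul_neg, uneg_neg, smul_sub, smul_add, rel_he, rel_hf, rel_ef]
  match_scalars <;> (field_simp; try ring)
lemma uyx' (hchar : (2 : F) ≠ 0) (w : U F) :
    uy F * (ux F * w) = ux F * (uy F * w) - ux F * w - uy F * w := by
  rw [← mul_assoc, uyx F hchar, sub_mul, sub_mul, mul_assoc]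

lemma uzy' (hchar : (2 : F) ≠ 0) (w : U F) :
    uz F * (uy F * w) = uy F * (uz F * w) - uy F * w - uz F * w := by
  rw [← mul_assoc, uzy F hchar, sub_mul, sub_mul, mul_assoc]

lemma uzx' (hchar : (2 : F) ≠ 0) (w : U F) :
    uz F * (ux F * w) = ux F * (uz F * w) + uz F * w + ux F * w := by
  rw [← mul_assoc, uzx F hchar, add_mul, add_mul, mul_assoc]

/-- `w = xy + xz + yz - y`, a central element of `U(sl₂)` (equal to `-Λ`). -/
def wU : U F := ux F * uy F + ux F * uz F + uy F * uz F - uy F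

lemma w_comm_x (hchar : (2 : F) ≠ 0) : wU F * ux F = ux F * wU F := by
  simp only [wU, add_mul, mul_add, sub_mul, mul_sub, mul_assoc,
    uyx F hchar, uyx' F hchar, uzy F hchar, uzy' F hchar, uzx F hchar, uzx' F hchar]
  match_scalars <;> ring

lemma w_comm_y (hchar : (2 : F) ≠ 0) : wU F * uy F = uy F * wU F := by
  simp only [wU, add_mul, mul_add, sub_mul, mul_sub, mul_assoc,
    uyx F hchar, uyx' F hchar, uzy F hchar, uzy' F hchar, uzx F hchar, uzx' F hchar]
  match_scalars <;> ring

lemma w_comm_z (hchar : (2 : F) ≠ 0) : wU F * uz F = uz F * wU F := by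
  simp only [wU, add_mul, mul_add, sub_mul, mul_sub, mul_assoc,
    uyx F hchar, uyx' F hchar, uzy F hchar, uzy' F hchar, uzx F hchar, uzx' F hchar]
  match_scalars <;> ring

lemma e_eq : uz F + uy F = e F := by rw [uz, uy]; with_unfolding_all exact sub_add_cancel _ _

lemma f_eq : -(ux F + uy F) = f F := by
  rw [ux, uy]
  have : -f F - (2:F)⁻¹ • h F + (2:F)⁻¹ • h F = -f F := by
    with_unfolding_all exact sub_add_cancel _ _
  rw [this]; with_unfolding_all exact neg_neg _

lemma h_eq (hchar : (2 : F) ≠ 0) : (2 : F) • uy F = h F := by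
  rw [uy, smul_smul, mul_inv_cancel₀ hchar, one_smul]

lemma w_comm (hchar : (2 : F) ≠ 0) (v : U F) : wU F * v = v * wU F := by
  have he' : wU F * e F = e F * wU F := by
    rw [← e_eq, mul_add, add_mul, w_comm_y F hchar, w_comm_z F hchar]
  have hf' : wU F * f F = f F * wU F := by
    rw [← f_eq, umul_neg, uneg_mul, mul_add, add_mul, w_comm_x F hchar, w_comm_y F hchar]
  have hh' : wU F * h F = h F * wU F := by
    rw [← h_eq F hchar, mul_smul_comm, smul_mul_assoc, w_comm_y F hchar]
  obtain ⟨w, rfl⟩ := RingQuot.mkAlgHom_surjective F (slRel F) v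
  induction w using FreeAlgebra.induction with
  | grade0 r =>
      rw [AlgHom.commutes]
      exact (Algebra.commutes r (wU F)).symm
  | grade1 i =>
      fin_cases i
      · exact he'
      · exact hf'
      · exact hh'
  | mul a b ha hb =>
      rw [map_mul, ← mul_assoc, ha, mul_assoc, hb, mul_assoc]
  | add a b ha hb =>
      rw [map_add, mul_add, add_mul, ha, hb]

lemma Tsub_mul (a b c : T F) : (a - b) * c = a * c - b * c := by
  with_unfolding_all exact sub_mul a b c
lemma Tmul_sub (a b c : T F) : a * (b - c) = a * b - a * c := by
  with_unfolding_all exact mul_sub a b c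
lemma Tzero_sub (a : T F) : (0 : T F) - a = -a := by
  with_unfolding_all exact zero_sub a
lemma Tneg_mul (a b : T F) : -a * b = -(a * b) := by
  rw [← Tzero_sub F a, Tsub_mul, zero_mul, Tzero_sub]
lemma Tmul_neg (a b : T F) : a * -b = -(a * b) := by
  rw [← Tzero_sub F b, Tmul_sub, mul_zero, Tzero_sub]
lemma Tsmul_sub (p : P F) (a b : T F) : p • (a - b) = p • a - p • b := by
  with_unfolding_all exact smul_sub p a b
lemma Tsmul_neg (p : P F) (a : T F) : p • (-a) = -(p • a) := by
  rw [← Tzero_sub F a, Tsmul_sub, smul_zero, Tzero_sub]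
/-- The inclusion `U(sl₂) → F[a,b,c] ⊗ U(sl₂)`. -/
def iU : U F →ₐ[F] T F := Algebra.TensorProduct.includeRight

lemma tsm (p q : P F) (u : U F) : p • (q ⊗ₜ[F] u) = (p * q) ⊗ₜ[F] u := by
  rw [TensorProduct.smul_tmul', smul_eq_mul]

lemma tsm1 (p : P F) (u : U F) : p ⊗ₜ[F] u = p • iU F u := by
  rw [iU, Algebra.TensorProduct.includeRight_apply, tsm, mul_one]

lemma tone : iU F (1 : U F) = (1 : T F) := map_one _

lemma Anat_eq : Anat F = (pa F * (pa F + 1)) • 1 + (pb F - pc F - pa F) • iU F (ux F)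
    + (pa F + pb F - pc F + 1) • iU F (uy F) - iU F (ux F) * iU F (uy F) := by
  rw [Anat, tsm1, tsm1, tsm1, tsm1, tone, map_mul, one_smul]

lemma Bnat_eq : Bnat F = (pb F * (pb F + 1)) • 1 + (pc F - pa F - pb F) • iU F (uy F)
    + (pb F + pc F - pa F + 1) • iU F (uz F) - iU F (uy F) * iU F (uz F) := by
  rw [Bnat, tsm1, tsm1, tsm1, tsm1, tone, map_mul, one_smul]

lemma Cnat_eq : Cnat F = (pc F * (pc F + 1)) • 1 + (pa F - pb F - pc F) • iU F (uz F)
    + (pc F + pa F - pb F + 1) • iU F (ux F) - iU F (uz F) * iU F (ux F) := by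
  rw [Cnat, tsm1, tsm1, tsm1, tsm1, tone, map_mul, one_smul]

lemma Dnat_eq : Dnat F = iU F (uz F) * (iU F (uy F) * iU F (ux F)) + iU F (uz F) * iU F (ux F)
    + (pc F + pb F * (pc F + pa F - pb F)) • iU F (ux F)
    + (pa F + pc F * (pa F + pb F - pc F)) • iU F (uy F)
    + (pb F + pa F * (pb F + pc F - pa F)) • iU F (uz F)
    + (pb F - pc F) • (iU F (ux F) * iU F (uy F))
    + (pc F - pa F) • (iU F (uy F) * iU F (uz F))
    + (pa F - pb F) • (iU F (uz F) * iU F (ux F)) := by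
  rw [Dnat, tsm1, tsm1, tsm1, tsm1, tsm1, tsm1, tsm1]
  simp only [map_add, map_mul, one_smul, mul_assoc]

lemma tyx (hchar : (2 : F) ≠ 0) : iU F (uy F) * iU F (ux F)
    = iU F (ux F) * iU F (uy F) - iU F (ux F) - iU F (uy F) := by
  rw [← map_mul, uyx F hchar, map_sub, map_sub, map_mul]

lemma tzy (hchar : (2 : F) ≠ 0) : iU F (uz F) * iU F (uy F)
    = iU F (uy F) * iU F (uz F) - iU F (uy F) - iU F (uz F) := by
  rw [← map_mul, uzy F hchar, map_sub, map_sub, map_mul]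

lemma tzx (hchar : (2 : F) ≠ 0) : iU F (uz F) * iU F (ux F)
    = iU F (ux F) * iU F (uz F) + iU F (uz F) + iU F (ux F) := by
  rw [← map_mul, uzx F hchar, map_add, map_add, map_mul]

lemma tyx' (hchar : (2 : F) ≠ 0) (w : T F) : iU F (uy F) * (iU F (ux F) * w)
    = iU F (ux F) * (iU F (uy F) * w) - iU F (ux F) * w - iU F (uy F) * w := by
  rw [← mul_assoc, tyx F hchar, Tsub_mul, Tsub_mul, mul_assoc]

lemma tzy' (hchar : (2 : F) ≠ 0) (w : T F) : iU F (uz F) * (iU F (uy F) * w)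
    = iU F (uy F) * (iU F (uz F) * w) - iU F (uy F) * w - iU F (uz F) * w := by
  rw [← mul_assoc, tzy F hchar, Tsub_mul, Tsub_mul, mul_assoc]

lemma tzx' (hchar : (2 : F) ≠ 0) (w : T F) : iU F (uz F) * (iU F (ux F) * w)
    = iU F (ux F) * (iU F (uz F) * w) + iU F (uz F) * w + iU F (ux F) * w := by
  rw [← mul_assoc, tzx F hchar, add_mul, add_mul, mul_assoc]
lemma iU_comm (v : U F) (hv : ∀ u, v * u = u * v) (t : T F) : iU F v * t = t * iU F v := by
  induction t using TensorProduct.induction_on with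
  | zero => rw [mul_zero, zero_mul]
  | tmul p u =>
      rw [iU, Algebra.TensorProduct.includeRight_apply, Algebra.TensorProduct.tmul_mul_tmul,
        Algebra.TensorProduct.tmul_mul_tmul, one_mul, mul_one, hv]
  | add s t hs ht => rw [mul_add, add_mul, hs, ht]

lemma central_comm (hchar : (2 : F) ≠ 0) (p q : P F) (t : T F) :
    (p • (1 : T F) + q • iU F (wU F)) * t = t * (p • (1 : T F) + q • iU F (wU F)) := by
  have hw := iU_comm F (wU F) (w_comm F hchar) t
  rw [add_mul, mul_add, smul_mul_assoc, smul_mul_assoc, mul_smul_comm, mul_smul_comm,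
    one_mul, mul_one, hw]

set_option maxHeartbeats 1600000

lemma TR1 (hchar : (2 : F) ≠ 0) : Anat F * Bnat F - Bnat F * Anat F = 2 * Dnat F := by
  rw [two_mul]
  simp only [Anat_eq, Bnat_eq, Dnat_eq, mul_add, add_mul, Tmul_sub, Tsub_mul, Tmul_neg,
    Tneg_mul, smul_add, Tsmul_sub, Tsmul_neg, smul_smul, smul_mul_assoc, mul_smul_comm,
    mul_assoc, mul_one, one_mul, tyx F hchar, tyx' F hchar, tzy F hchar, tzy' F hchar,
    tzx F hchar, tzx' F hchar]
  match_scalars <;> ring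

lemma TR2 (hchar : (2 : F) ≠ 0) : Bnat F * Cnat F - Cnat F * Bnat F = 2 * Dnat F := by
  rw [two_mul]
  simp only [Bnat_eq, Cnat_eq, Dnat_eq, mul_add, add_mul, Tmul_sub, Tsub_mul, Tmul_neg,
    Tneg_mul, smul_add, Tsmul_sub, Tsmul_neg, smul_smul, smul_mul_assoc, mul_smul_comm,
    mul_assoc, mul_one, one_mul, tyx F hchar, tyx' F hchar, tzy F hchar, tzy' F hchar,
    tzx F hchar, tzx' F hchar]
  match_scalars <;> ring

lemma TR3 (hchar : (2 : F) ≠ 0) : Cnat F * Anat F - Anat F * Cnat F = 2 * Dnat F := by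
  rw [two_mul]
  simp only [Anat_eq, Cnat_eq, Dnat_eq, mul_add, add_mul, Tmul_sub, Tsub_mul, Tmul_neg,
    Tneg_mul, smul_add, Tsmul_sub, Tsmul_neg, smul_smul, smul_mul_assoc, mul_smul_comm,
    mul_assoc, mul_one, one_mul, tyx F hchar, tyx' F hchar, tzy F hchar, tzy' F hchar,
    tzx F hchar, tzx' F hchar]
  match_scalars <;> ring

lemma Talpha (hchar : (2 : F) ≠ 0) :
    Anat F * Dnat F - Dnat F * Anat F + Anat F * Cnat F - Bnat F * Anat F
      = ((pc F * (pc F + 1) - pb F * (pb F + 1)) * (pa F * (pa F + 1))) • (1 : T F)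
        + (pc F * (pc F + 1) - pb F * (pb F + 1)) • iU F (wU F) := by
  simp only [Anat_eq, Bnat_eq, Cnat_eq, Dnat_eq, wU, map_add, map_sub, map_mul,
    mul_add, add_mul, Tmul_sub, Tsub_mul, Tmul_neg, Tneg_mul, smul_add, Tsmul_sub, Tsmul_neg,
    smul_smul, smul_mul_assoc, mul_smul_comm,
    mul_assoc, mul_one, one_mul, tyx F hchar, tyx' F hchar, tzy F hchar, tzy' F hchar,
    tzx F hchar, tzx' F hchar]
  match_scalars <;> ring

lemma Tbeta (hchar : (2 : F) ≠ 0) :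
    Bnat F * Dnat F - Dnat F * Bnat F + Bnat F * Anat F - Cnat F * Bnat F
      = ((pa F * (pa F + 1) - pc F * (pc F + 1)) * (pb F * (pb F + 1))) • (1 : T F)
        + (pa F * (pa F + 1) - pc F * (pc F + 1)) • iU F (wU F) := by
  simp only [Anat_eq, Bnat_eq, Cnat_eq, Dnat_eq, wU, map_add, map_sub, map_mul,
    mul_add, add_mul, Tmul_sub, Tsub_mul, Tmul_neg, Tneg_mul, smul_add, Tsmul_sub, Tsmul_neg,
    smul_smul, smul_mul_assoc, mul_smul_comm,
    mul_assoc, mul_one, one_mul, tyx F hchar, tyx' F hchar, tzy F hchar, tzy' F hchar,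
    tzx F hchar, tzx' F hchar]
  match_scalars <;> ring

lemma Tgamma (hchar : (2 : F) ≠ 0) :
    Cnat F * Dnat F - Dnat F * Cnat F + Cnat F * Bnat F - Anat F * Cnat F
      = ((pb F * (pb F + 1) - pa F * (pa F + 1)) * (pc F * (pc F + 1))) • (1 : T F)
        + (pb F * (pb F + 1) - pa F * (pa F + 1)) • iU F (wU F) := by
  simp only [Anat_eq, Bnat_eq, Cnat_eq, Dnat_eq, wU, map_add, map_sub, map_mul,
    mul_add, add_mul, Tmul_sub, Tsub_mul, Tmul_neg, Tneg_mul, smul_add, Tsmul_sub, Tsmul_neg,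
    smul_smul, smul_mul_assoc, mul_smul_comm,
    mul_assoc, mul_one, one_mul, tyx F hchar, tyx' F hchar, tzy F hchar, tzy' F hchar,
    tzx F hchar, tzx' F hchar]
  match_scalars <;> ring

/-- The images of the four generators. -/
def gfun : Fin 4 → T F := fun i => match i with
  | 0 => Anat F
  | 1 => Bnat F
  | 2 => Cnat F
  | 3 => Dnat F

lemma lift_fA : FreeAlgebra.lift F (gfun F) (fA F) = Anat F := by
  rw [fA, FreeAlgebra.lift_ι_apply]; rfl
lemma lift_fB : FreeAlgebra.lift F (gfun F) (fB F) = Bnat F := by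
  rw [fB, FreeAlgebra.lift_ι_apply]; rfl
lemma lift_fC : FreeAlgebra.lift F (gfun F) (fC F) = Cnat F := by
  rw [fC, FreeAlgebra.lift_ι_apply]; rfl
lemma lift_fD : FreeAlgebra.lift F (gfun F) (fD F) = Dnat F := by
  rw [fD, FreeAlgebra.lift_ι_apply]; rfl

lemma hrel (hchar : (2 : F) ≠ 0) : ∀ ⦃x y : FreeAlgebra F (Fin 4)⦄, racahRel F x y →
    FreeAlgebra.lift F (gfun F) x = FreeAlgebra.lift F (gfun F) y := by
  intro x y r
  cases r with
  | AB =>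
      simp only [map_sub, map_mul, map_ofNat, lift_fA, lift_fB, lift_fD]
      exact TR1 F hchar
  | BC =>
      simp only [map_sub, map_mul, map_ofNat, lift_fB, lift_fC, lift_fD]
      exact TR2 F hchar
  | CA =>
      simp only [map_sub, map_mul, map_ofNat, lift_fC, lift_fA, lift_fD]
      exact TR3 F hchar
  | calpha i =>
      rw [map_mul, map_mul]
      have hal : FreeAlgebra.lift F (gfun F) (falpha F)
          = ((pc F * (pc F + 1) - pb F * (pb F + 1)) * (pa F * (pa F + 1))) • (1 : T F)
            + (pc F * (pc F + 1) - pb F * (pb F + 1)) • iU F (wU F) := by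
        simp only [falpha, map_add, map_sub, map_mul, lift_fA, lift_fB, lift_fC, lift_fD]
        exact Talpha F hchar
      rw [hal]
      exact central_comm F hchar _ _ _
  | cbeta i =>
      rw [map_mul, map_mul]
      have hal : FreeAlgebra.lift F (gfun F) (fbeta F)
          = ((pa F * (pa F + 1) - pc F * (pc F + 1)) * (pb F * (pb F + 1))) • (1 : T F)
            + (pa F * (pa F + 1) - pc F * (pc F + 1)) • iU F (wU F) := by
        simp only [fbeta, map_add, map_sub, map_mul, lift_fA, lift_fB, lift_fC, lift_fD]
        exact Tbeta F hchar
      rw [hal]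
      exact central_comm F hchar _ _ _
  | cgamma i =>
      rw [map_mul, map_mul]
      have hal : FreeAlgebra.lift F (gfun F) (fgamma F)
          = ((pb F * (pb F + 1) - pa F * (pa F + 1)) * (pc F * (pc F + 1))) • (1 : T F)
            + (pb F * (pb F + 1) - pa F * (pa F + 1)) • iU F (wU F) := by
        simp only [fgamma, map_add, map_sub, map_mul, lift_fA, lift_fB, lift_fC, lift_fD]
        exact Tgamma F hchar
      rw [hal]
      exact central_comm F hchar _ _ _

theorem statement0 (hchar : (2 : F) ≠ 0) :
    ∃! φ : Racah F →ₐ[F] T F,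
      φ (A F) = Anat F ∧ φ (B F) = Bnat F ∧ φ (C F) = Cnat F ∧ φ (D F) = Dnat F := by
  set φ₀ : Racah F →ₐ[F] T F :=
    RingQuot.liftAlgHom F ⟨FreeAlgebra.lift F (gfun F), hrel F hchar⟩ with hφ₀
  have hA : φ₀ (A F) = Anat F := by
    rw [hφ₀, A, RingQuot.liftAlgHom_mkAlgHom_apply, lift_fA]
  have hB : φ₀ (B F) = Bnat F := by
    rw [hφ₀, B, RingQuot.liftAlgHom_mkAlgHom_apply, lift_fB]
  have hC : φ₀ (C F) = Cnat F := by
    rw [hφ₀, C, RingQuot.liftAlgHom_mkAlgHom_apply, lift_fC]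
  have hD : φ₀ (D F) = Dnat F := by
    rw [hφ₀, D, RingQuot.liftAlgHom_mkAlgHom_apply, lift_fD]
  refine ⟨φ₀, ⟨hA, hB, hC, hD⟩, ?_⟩
  rintro ψ ⟨h1, h2, h3, h4⟩
  refine RingQuot.ringQuot_ext' F _ _ (FreeAlgebra.hom_ext (funext fun i => ?_))
  simp only [Function.comp_apply, AlgHom.coe_comp]
  fin_cases i
  · exact h1.trans hA.symm
  · exact h2.trans hB.symm
  · exact h3.trans hC.symm
  · exact h4.trans hD.symm

end RacahPaper
end
end

section
/- The four polynomials y₁ = x₁²x₂ + x₁x₂² − x₁x₂x₃ − x₁x₂x₄ − x₁x₃x₄ − x₂x₃x₄ + x₃²x₄ + x₃x₄² − x₁x₃ − x₁x₄ − x₂x₃ − x₂x₄, y₂ = x₁x₃ − x₁x₄ − x₂x₃ + x₂x₄, y₃ = x₁x₄ − x₁x₂ − x₃x₄ + x₂x₃, and y₄ = x₁ + x₂ + x₃ + x₄ are algebraically independent over F in the polynomial ring F[x₁,x₂,x₃,x₄]. -/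
open scoped TensorProduct

noncomputable section

namespace RacahPaper

variable (F : Type) [Field F]

-- ===== auxiliary material for `statement5` =====

open MvPolynomial in
lemma aux_prodmon {K : Type*} [CommSemiring K] {σ : Type*} (s : Finset σ) (g : σ → (σ →₀ ℕ)) :
    ∏ i ∈ s, monomial (g i) (1 : K) = monomial (∑ i ∈ s, g i) 1 := by
  classical
  induction s using Finset.induction with
  | empty => simp [MvPolynomial.monomial_zero']
  | insert _ _ hx ih => rw [Finset.prod_insert hx, ih, Finset.sum_insert hx, monomial_mul, one_mul]

open MvPolynomial in
/-- Monomials whose exponent vectors are "independent" (the induced map on exponents is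
injective) are algebraically independent. -/
lemma aux_lemA {K : Type*} [Field K] {n : ℕ} (m : Fin n → (Fin n →₀ ℕ))
    (hinj : Function.Injective fun α : Fin n →₀ ℕ => ∑ i, α i • m i) :
    AlgebraicIndependent K fun i => (monomial (m i) (1 : K)) := by
  rw [algebraicIndependent_iff]
  intro p hp
  have key : (aeval fun i => (monomial (m i) (1 : K))) p
      = ∑ α ∈ p.support, monomial (∑ i, α i • m i) (p.coeff α) := by
    rw [aeval_def, eval₂_eq']
    refine Finset.sum_congr rfl fun α _ => ?_
    have : ∀ i : Fin n, (monomial (m i) (1:K)) ^ α i = monomial (α i • m i) 1 := by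
      intro i; rw [monomial_pow, one_pow]
    simp_rw [this, aux_prodmon, algebraMap_eq, C_mul_monomial, mul_one]
  rw [key] at hp
  ext α
  have := congrArg (fun q => MvPolynomial.coeff (∑ i, α i • m i) q) hp
  simp only [MvPolynomial.coeff_sum, MvPolynomial.coeff_monomial, MvPolynomial.coeff_zero] at this
  rw [MvPolynomial.coeff_zero]
  by_cases hα : α ∈ p.support
  · rw [Finset.sum_eq_single_of_mem α hα] at this
    · simpa using this
    · intro β hβ hne
      rw [if_neg]
      exact fun h => hne (hinj h)
  · simpa using MvPolynomial.notMem_support_iff.mp hα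

open Polynomial in
/-- If the leading coefficients of a family of polynomials over a domain are algebraically
independent, then so is the family itself. -/
lemma aux_lemB {K R : Type*} [Field K] [CommRing R] [IsDomain R] [Algebra K R]
    {n : ℕ} (f : Fin n → Polynomial R)
    (h : AlgebraicIndependent K fun i => (f i).leadingCoeff) :
    AlgebraicIndependent K f := by
  have hc0 : ∀ i, (f i).leadingCoeff ≠ 0 := fun i => h.ne_zero i
  have hf0 : ∀ i, f i ≠ 0 := fun i hz => hc0 i (by rw [hz, leadingCoeff_zero])
  rw [algebraicIndependent_iff]
  intro p hp
  by_contra hp0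
  set d : Fin n → ℕ := fun i => (f i).natDegree with hd
  set w : (Fin n →₀ ℕ) → ℕ := fun α => ∑ i, α i * d i with hw
  have hsupp : p.support.Nonempty := MvPolynomial.support_nonempty.mpr hp0
  obtain ⟨α₀, hα₀, hmax⟩ := p.support.exists_max_image w hsupp
  set D := w α₀ with hD
  have hprod : ∀ α : Fin n →₀ ℕ, (∏ i, f i ^ α i).natDegree = w α := by
    intro α
    rw [Polynomial.natDegree_prod _ _ (fun i _ => pow_ne_zero _ (hf0 i))]
    simp [hw, hd, Polynomial.natDegree_pow]
  have hlc : ∀ α : Fin n →₀ ℕ,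
      (∏ i, f i ^ α i).coeff (w α) = ∏ i, (f i).leadingCoeff ^ α i := by
    intro α
    rw [← hprod α, Polynomial.coeff_natDegree, Polynomial.leadingCoeff_prod]
    simp [Polynomial.leadingCoeff_pow]
  have key : (MvPolynomial.aeval f p).coeff D
      = ∑ α ∈ p.support.filter (fun α => w α = D),
          algebraMap K R (p.coeff α) * ∏ i, (f i).leadingCoeff ^ α i := by
    rw [MvPolynomial.aeval_def, MvPolynomial.eval₂_eq', Polynomial.finset_sum_coeff]
    rw [← Finset.sum_filter_add_sum_filter_not p.support (fun α => w α = D)]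
    have h2 : ∀ α ∈ p.support.filter (fun α => ¬ w α = D),
        (algebraMap K (Polynomial R) (p.coeff α) * ∏ i, f i ^ α i).coeff D = 0 := by
      intro α hα
      rw [Finset.mem_filter] at hα
      have hlt : w α < D := lt_of_le_of_ne (hmax α hα.1) hα.2
      rw [Polynomial.algebraMap_apply, Polynomial.coeff_C_mul,
        Polynomial.coeff_eq_zero_of_natDegree_lt (by rw [hprod]; exact hlt), mul_zero]
    rw [Finset.sum_eq_zero h2, add_zero]
    refine Finset.sum_congr rfl fun α hα => ?_
    rw [Finset.mem_filter] at hα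
    rw [← hα.2, Polynomial.algebraMap_apply, Polynomial.coeff_C_mul, hlc α]
  set q : MvPolynomial (Fin n) K :=
    ∑ α ∈ p.support.filter (fun α => w α = D), MvPolynomial.monomial α (p.coeff α) with hq
  have hq0 : q ≠ 0 := by
    intro hzero
    have hmem : α₀ ∈ p.support.filter (fun α => w α = D) := by
      simp [Finset.mem_filter, hα₀, hD]
    have : MvPolynomial.coeff α₀ q = p.coeff α₀ := by
      rw [hq, MvPolynomial.coeff_sum, Finset.sum_eq_single_of_mem α₀ hmem]
      · rw [MvPolynomial.coeff_monomial, if_pos rfl]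
      · intro β hβ hne; rw [MvPolynomial.coeff_monomial, if_neg hne]
    rw [hzero, MvPolynomial.coeff_zero] at this
    exact MvPolynomial.mem_support_iff.mp hα₀ this.symm
  have haq : MvPolynomial.aeval (fun i => (f i).leadingCoeff) q = 0 := by
    rw [hq, map_sum]
    rw [hp, Polynomial.coeff_zero] at key
    rw [key]
    refine Finset.sum_congr rfl fun α hα => ?_
    simp [MvPolynomial.aeval_monomial, Finsupp.prod_pow]
  exact hq0 (algebraicIndependent_iff.mp h q haq)

lemma aux_lc_of {R : Type*} [CommRing R] (p : Polynomial R) (D : ℕ) (c : R)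
    (hle : p.natDegree ≤ D) (hc : p.coeff D = c) (h0 : c ≠ 0) : p.leadingCoeff = c := by
  have hDeq : p.natDegree = D :=
    le_antisymm hle (Polynomial.le_natDegree_of_ne_zero (by rw [hc]; exact h0))
  rw [Polynomial.leadingCoeff, hDeq, hc]

open MvPolynomial in
/-- The substitution `xᵢ ↦ uᵢ t^{aᵢ}` with weights `(5,1,3,2)`. -/
def auxphix : Fin 4 → Polynomial (MvPolynomial (Fin 4) F) :=
  ![Polynomial.C (X 0) * Polynomial.X ^ 5, Polynomial.C (X 1) * Polynomial.X ^ 1,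
    Polynomial.C (X 2) * Polynomial.X ^ 3, Polynomial.C (X 3) * Polynomial.X ^ 2]

/-- Exponents of the leading monomials. -/
noncomputable def auxm : Fin 4 → (Fin 4 →₀ ℕ) :=
  ![Finsupp.single 0 2 + Finsupp.single 1 1, Finsupp.single 0 1 + Finsupp.single 2 1,
    Finsupp.single 0 1 + Finsupp.single 3 1, Finsupp.single 0 1]

lemma auxm_inj : Function.Injective fun α : Fin 4 →₀ ℕ => ∑ i, α i • auxm i := by
  intro α β hsum
  simp only at hsum
  have h : ∀ j, (∑ i : Fin 4, α i • auxm i) j = (∑ i : Fin 4, β i • auxm i) j :=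
    fun j => by rw [hsum]
  have h0 := h 0
  have h1 := h 1
  have h2 := h 2
  have h3 := h 3
  simp [Finsupp.finset_sum_apply, Fin.sum_univ_four, auxm, Finsupp.add_apply,
    Finsupp.smul_apply, Finsupp.single_apply] at h0 h1 h2 h3
  ext j
  fin_cases j
  · show α 0 = β 0; omega
  · show α 1 = β 1; omega
  · show α 2 = β 2; omega
  · show α 3 = β 3; omega

open MvPolynomial in
lemma aux_monX {K : Type*} [Field K] (i : Fin 4) (k : ℕ) :
    (monomial (Finsupp.single i k) (1 : K)) = X i ^ k := by rw [X_pow_eq_monomial]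


open MvPolynomial in
lemma aux_lc_y1 : ((MvPolynomial.aeval (auxphix F)) ((X 0) ^ 2 * X 1 + X 0 * (X 1) ^ 2
      - X 0 * X 1 * X 2 - X 0 * X 1 * X 3 - X 0 * X 2 * X 3 - X 1 * X 2 * X 3
      + (X 2) ^ 2 * X 3 + X 2 * (X 3) ^ 2
      - X 0 * X 2 - X 0 * X 3 - X 1 * X 2 - X 1 * X 3 : MvPolynomial (Fin 4) F)).leadingCoeff
    = monomial (Finsupp.single 0 2 + Finsupp.single 1 1) (1 : F) := by
  have e1 : (MvPolynomial.aeval (auxphix F)) ((X 0) ^ 2 * X 1 + X 0 * (X 1) ^ 2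
        - X 0 * X 1 * X 2 - X 0 * X 1 * X 3 - X 0 * X 2 * X 3 - X 1 * X 2 * X 3
        + (X 2) ^ 2 * X 3 + X 2 * (X 3) ^ 2
        - X 0 * X 2 - X 0 * X 3 - X 1 * X 2 - X 1 * X 3 : MvPolynomial (Fin 4) F)
      = Polynomial.C (X 0 ^ 2 * X 1) * Polynomial.X ^ 11
        + Polynomial.C (X 0 * X 1 ^ 2) * Polynomial.X ^ 7
        - Polynomial.C (X 0 * X 1 * X 2) * Polynomial.X ^ 9
        - Polynomial.C (X 0 * X 1 * X 3) * Polynomial.X ^ 8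
        - Polynomial.C (X 0 * X 2 * X 3) * Polynomial.X ^ 10
        - Polynomial.C (X 1 * X 2 * X 3) * Polynomial.X ^ 6
        + Polynomial.C (X 2 ^ 2 * X 3) * Polynomial.X ^ 8
        + Polynomial.C (X 2 * X 3 ^ 2) * Polynomial.X ^ 7
        - Polynomial.C (X 0 * X 2) * Polynomial.X ^ 8
        - Polynomial.C (X 0 * X 3) * Polynomial.X ^ 7
        - Polynomial.C (X 1 * X 2) * Polynomial.X ^ 4
        - Polynomial.C (X 1 * X 3) * Polynomial.X ^ 3 := by
    simp only [map_add, map_sub, map_mul, map_pow, aeval_X, auxphix, Matrix.cons_val_zero,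
      Matrix.cons_val_one, Matrix.head_cons, Matrix.cons_val_two, Matrix.tail_cons,
      Matrix.cons_val_three]
    ring
  have hm1 : (monomial (Finsupp.single 0 2 + Finsupp.single 1 1) (1 : F))
      = (X 0 ^ 2 * X 1 : MvPolynomial (Fin 4) F) := by
    rw [show (1 : F) = 1 * 1 by ring, ← monomial_mul]
    simp only [X_pow_eq_monomial]
    simp only [X]
  rw [e1, hm1]
  apply aux_lc_of _ 11
  · compute_degree
  · simp only [Polynomial.coeff_add, Polynomial.coeff_sub, ← map_mul, ← map_pow,
      Polynomial.coeff_C_mul, Polynomial.coeff_X_pow]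
    norm_num
  · exact mul_ne_zero (pow_ne_zero _ (X_ne_zero 0)) (X_ne_zero 1)

open MvPolynomial in
lemma aux_lc_y2 : ((MvPolynomial.aeval (auxphix F))
      (X 0 * X 2 - X 0 * X 3 - X 1 * X 2 + X 1 * X 3 : MvPolynomial (Fin 4) F)).leadingCoeff
    = monomial (Finsupp.single 0 1 + Finsupp.single 2 1) (1 : F) := by
  have e2 : (MvPolynomial.aeval (auxphix F))
        (X 0 * X 2 - X 0 * X 3 - X 1 * X 2 + X 1 * X 3 : MvPolynomial (Fin 4) F)
      = Polynomial.C (X 0 * X 2) * Polynomial.X ^ 8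
        - Polynomial.C (X 0 * X 3) * Polynomial.X ^ 7
        - Polynomial.C (X 1 * X 2) * Polynomial.X ^ 4
        + Polynomial.C (X 1 * X 3) * Polynomial.X ^ 3 := by
    simp only [map_add, map_sub, map_mul, map_pow, aeval_X, auxphix, Matrix.cons_val_zero,
      Matrix.cons_val_one, Matrix.head_cons, Matrix.cons_val_two, Matrix.tail_cons,
      Matrix.cons_val_three]
    ring
  have hm2 : (monomial (Finsupp.single 0 1 + Finsupp.single 2 1) (1 : F))
      = (X 0 * X 2 : MvPolynomial (Fin 4) F) := by
    rw [show (1 : F) = 1 * 1 by ring, ← monomial_mul]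
    simp only [X]
  rw [e2, hm2]
  apply aux_lc_of _ 8
  · compute_degree
  · simp only [Polynomial.coeff_add, Polynomial.coeff_sub, ← map_mul, ← map_pow,
      Polynomial.coeff_C_mul, Polynomial.coeff_X_pow]
    norm_num
  · exact mul_ne_zero (X_ne_zero 0) (X_ne_zero 2)

open MvPolynomial in
lemma aux_lc_y3 : ((MvPolynomial.aeval (auxphix F))
      (X 0 * X 3 - X 0 * X 1 - X 2 * X 3 + X 1 * X 2 : MvPolynomial (Fin 4) F)).leadingCoeff
    = monomial (Finsupp.single 0 1 + Finsupp.single 3 1) (1 : F) := by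
  have e3 : (MvPolynomial.aeval (auxphix F))
        (X 0 * X 3 - X 0 * X 1 - X 2 * X 3 + X 1 * X 2 : MvPolynomial (Fin 4) F)
      = Polynomial.C (X 0 * X 3) * Polynomial.X ^ 7
        - Polynomial.C (X 0 * X 1) * Polynomial.X ^ 6
        - Polynomial.C (X 2 * X 3) * Polynomial.X ^ 5
        + Polynomial.C (X 1 * X 2) * Polynomial.X ^ 4 := by
    simp only [map_add, map_sub, map_mul, map_pow, aeval_X, auxphix, Matrix.cons_val_zero,
      Matrix.cons_val_one, Matrix.head_cons, Matrix.cons_val_two, Matrix.tail_cons,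
      Matrix.cons_val_three]
    ring
  have hm3 : (monomial (Finsupp.single 0 1 + Finsupp.single 3 1) (1 : F))
      = (X 0 * X 3 : MvPolynomial (Fin 4) F) := by
    rw [show (1 : F) = 1 * 1 by ring, ← monomial_mul]
    simp only [X]
  rw [e3, hm3]
  apply aux_lc_of _ 7
  · compute_degree
  · simp only [Polynomial.coeff_add, Polynomial.coeff_sub, ← map_mul, ← map_pow,
      Polynomial.coeff_C_mul, Polynomial.coeff_X_pow]
    norm_num
  · exact mul_ne_zero (X_ne_zero 0) (X_ne_zero 3)

open MvPolynomial in
lemma aux_lc_y4 : ((MvPolynomial.aeval (auxphix F))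
      (X 0 + X 1 + X 2 + X 3 : MvPolynomial (Fin 4) F)).leadingCoeff
    = monomial (Finsupp.single 0 1) (1 : F) := by
  have e4 : (MvPolynomial.aeval (auxphix F)) (X 0 + X 1 + X 2 + X 3 : MvPolynomial (Fin 4) F)
      = Polynomial.C (X 0) * Polynomial.X ^ 5
        + Polynomial.C (X 1) * Polynomial.X ^ 1
        + Polynomial.C (X 2) * Polynomial.X ^ 3
        + Polynomial.C (X 3) * Polynomial.X ^ 2 := by
    simp only [map_add, map_sub, map_mul, map_pow, aeval_X, auxphix, Matrix.cons_val_zero,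
      Matrix.cons_val_one, Matrix.head_cons, Matrix.cons_val_two, Matrix.tail_cons,
      Matrix.cons_val_three]
  have hm4 : (monomial (Finsupp.single 0 1) (1 : F)) = (X 0 : MvPolynomial (Fin 4) F) := by
    simp only [X]
  rw [e4, hm4]
  apply aux_lc_of _ 5
  · compute_degree
  · simp only [Polynomial.coeff_add, Polynomial.coeff_sub, ← map_mul, ← map_pow,
      Polynomial.coeff_C_mul, Polynomial.coeff_X_pow]
    norm_num
  · exact X_ne_zero 0

open MvPolynomial in
theorem statement5 (hchar : (2 : F) ≠ 0) :
    AlgebraicIndependent F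
      ![(X 0) ^ 2 * X 1 + X 0 * (X 1) ^ 2 - X 0 * X 1 * X 2 - X 0 * X 1 * X 3
          - X 0 * X 2 * X 3 - X 1 * X 2 * X 3 + (X 2) ^ 2 * X 3 + X 2 * (X 3) ^ 2
          - X 0 * X 2 - X 0 * X 3 - X 1 * X 2 - X 1 * X 3,
        X 0 * X 2 - X 0 * X 3 - X 1 * X 2 + X 1 * X 3,
        X 0 * X 3 - X 0 * X 1 - X 2 * X 3 + X 1 * X 2,
        (X 0 + X 1 + X 2 + X 3 : MvPolynomial (Fin 4) F)] := by
  classical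
  apply AlgebraicIndependent.of_comp (MvPolynomial.aeval (auxphix F) :
    MvPolynomial (Fin 4) F →ₐ[F] Polynomial (MvPolynomial (Fin 4) F))
  apply aux_lemB
  have hfun : (fun i => (((MvPolynomial.aeval (auxphix F)) ∘
      ![(X 0) ^ 2 * X 1 + X 0 * (X 1) ^ 2 - X 0 * X 1 * X 2 - X 0 * X 1 * X 3
          - X 0 * X 2 * X 3 - X 1 * X 2 * X 3 + (X 2) ^ 2 * X 3 + X 2 * (X 3) ^ 2
          - X 0 * X 2 - X 0 * X 3 - X 1 * X 2 - X 1 * X 3,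
        X 0 * X 2 - X 0 * X 3 - X 1 * X 2 + X 1 * X 3,
        X 0 * X 3 - X 0 * X 1 - X 2 * X 3 + X 1 * X 2,
        (X 0 + X 1 + X 2 + X 3 : MvPolynomial (Fin 4) F)]) i).leadingCoeff)
      = fun i => monomial (auxm i) (1 : F) := by
    funext i
    fin_cases i
    · exact aux_lc_y1 F
    · exact aux_lc_y2 F
    · exact aux_lc_y3 F
    · exact aux_lc_y4 F
  rw [hfun]
  exact aux_lemA auxm auxm_inj

end RacahPaper
end
end

section
/- The following six elements of U(sl₂) coincide: zyx + zx, zxy − zy, yzx − yx, xzy + xy, yxz + yz, and xyz − xz. -/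
open scoped TensorProduct

noncomputable section

namespace RacahPaper

variable (F : Type) [Field F]

section Equitable

variable {R : Type*} [Ring R]

/-- For `y = h/2`, the elements `-f - y` and `e - y` are the equitable generators `x` and `z`. -/
theorem equitable_relations {e f y : R} (hye : y * e - e * y = e) (hyf : y * f - f * y = -f)
    (hef : e * f - f * e = y + y) :
    (-f - y) * y - y * (-f - y) = (-f - y) + y ∧
    y * (e - y) - (e - y) * y = y + (e - y) ∧
    (e - y) * (-f - y) - (-f - y) * (e - y) = (e - y) + (-f - y) := by
  refine ⟨?_, ?_, ?_⟩
  · rw [show (-f - y) * y - y * (-f - y) = y * f - f * y by noncomm_ring, hyf]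
    abel
  · rw [show y * (e - y) - (e - y) * y = y * e - e * y by noncomm_ring, hye]
    abel
  · rw [show (e - y) * (-f - y) - (-f - y) * (e - y)
        = -(e * f - f * e) + (y * e - e * y) + (y * f - f * y) by noncomm_ring, hef, hye, hyf]
    abel

/-- Each identity is one equitable relation multiplied on one side by a generator. -/
theorem cubic_identities_of_equitable {x y z : R} (hxy : x * y - y * x = x + y)
    (hyz : y * z - z * y = y + z) (hzx : z * x - x * z = z + x) :
    z * y * x + z * x = z * x * y - z * y ∧
    z * y * x + z * x = y * z * x - y * x ∧
    z * y * x + z * x = x * z * y + x * y ∧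
    z * y * x + z * x = y * x * z + y * z ∧
    z * y * x + z * x = x * y * z - x * z := by
  have hxy' : x * y = y * x + (x + y) := by rw [← hxy]; abel
  have hyz' : y * z = z * y + (y + z) := by rw [← hyz]; abel
  have hxz' : x * z = z * x - (z + x) := by rw [← hzx]; abel
  have h₁ : z * y * x + z * x = z * x * y - z * y := by rw [mul_assoc z x y, hxy']; noncomm_ring
  have h₂ : z * y * x + z * x = y * z * x - y * x := by rw [hyz']; noncomm_ring
  have h₄ : z * y * x + z * x = y * x * z + y * z := by
    rw [h₂, mul_assoc y x z, hxz']; noncomm_ring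
  refine ⟨h₁, h₂, ?_, h₄, ?_⟩
  · rw [h₁, hxz']; noncomm_ring
  · rw [h₄, hxy']; noncomm_ring

end Equitable

theorem e_mul_f_sub_f_mul_e : e F * f F - f F * e F = h F := by
  simpa [e, f, h, map_ofNat] using RingQuot.mkAlgHom_rel F (slRel.ef (F := F))

theorem h_mul_e_sub_e_mul_h : h F * e F - e F * h F = 2 * e F := by
  simpa [e, h, map_ofNat] using RingQuot.mkAlgHom_rel F (slRel.he (F := F))

theorem h_mul_f_sub_f_mul_h : h F * f F - f F * h F = -(2 * f F) := by
  simpa [f, h, map_ofNat] using RingQuot.mkAlgHom_rel F (slRel.hf (F := F))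

theorem uy_mul_sub_mul_uy (u : U F) : uy F * u - u * uy F = (2 : F)⁻¹ • (h F * u - u * h F) := by
  rw [uy, smul_mul_assoc, mul_smul_comm, smul_sub]

section CharNeTwo

variable {F} (hchar : (2 : F) ≠ 0)
include hchar

theorem inv_two_smul_two_mul {A : Type*} [Ring A] [Module F A] (u : A) : (2 : F)⁻¹ • (2 * u) = u := by
  rw [two_mul, ← two_smul F, smul_smul, inv_mul_cancel₀ hchar, one_smul]

theorem uy_mul_e_sub_e_mul_uy : uy F * e F - e F * uy F = e F := by
  rw [uy_mul_sub_mul_uy, h_mul_e_sub_e_mul_h, inv_two_smul_two_mul hchar]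

theorem uy_mul_f_sub_f_mul_uy : uy F * f F - f F * uy F = -f F := by
  rw [uy_mul_sub_mul_uy, h_mul_f_sub_f_mul_h, smul_neg, inv_two_smul_two_mul hchar]

theorem e_mul_f_sub_f_mul_e_eq_uy_add_uy : e F * f F - f F * e F = uy F + uy F := by
  rw [e_mul_f_sub_f_mul_e, uy, ← add_smul, ← two_mul, mul_inv_cancel₀ hchar, one_smul]

end CharNeTwo

theorem statement9 (hchar : (2 : F) ≠ 0) :
    uz F * uy F * ux F + uz F * ux F = uz F * ux F * uy F - uz F * uy F ∧
    uz F * uy F * ux F + uz F * ux F = uy F * uz F * ux F - uy F * ux F ∧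
    uz F * uy F * ux F + uz F * ux F = ux F * uz F * uy F + ux F * uy F ∧
    uz F * uy F * ux F + uz F * ux F = uy F * ux F * uz F + uy F * uz F ∧
    uz F * uy F * ux F + uz F * ux F = ux F * uy F * uz F - ux F * uz F := by
  obtain ⟨hxy, hyz, hzx⟩ := equitable_relations (uy_mul_e_sub_e_mul_uy hchar)
    (uy_mul_f_sub_f_mul_uy hchar) (e_mul_f_sub_f_mul_e_eq_uy_add_uy hchar)
  exact cubic_identities_of_equitable hxy hyz hzx

end RacahPaper
end
end

section
/- The following equations hold in U(sl₂): [w, x] = xyx − xzx, [w, y] = yzy − yxy, and [w, z] = zxz − zyz. -/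
open scoped TensorProduct

noncomputable section

namespace RacahPaper

variable (F : Type) [Field F]

private lemma key1 {R : Type*} [Ring R] (X Y Z : R)
    (r1 : X * Y - (Y * X + X + Y) = 0) (r3 : X * Z - (Z * X - Z - X) = 0) :
    (Z * Y * X + Z * X) * X - X * (Z * Y * X + Z * X) = X * Y * X - X * Z * X := by
  rw [← sub_eq_zero]
  calc (Z * Y * X + Z * X) * X - X * (Z * Y * X + Z * X) - (X * Y * X - X * Z * X)
      = -((X * Z - (Z * X - Z - X)) * (Y * X)) - Z * (X * Y - (Y * X + X + Y)) * X := by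
        noncomm_ring
    _ = 0 := by rw [r1, r3]; simp

private lemma key2 {R : Type*} [Ring R] (X Y Z : R)
    (r1 : X * Y - (Y * X + X + Y) = 0) (r2 : Y * Z - (Z * Y + Y + Z) = 0) :
    (Z * Y * X + Z * X) * Y - Y * (Z * Y * X + Z * X) = Y * Z * Y - Y * X * Y := by
  rw [← sub_eq_zero]
  calc (Z * Y * X + Z * X) * Y - Y * (Z * Y * X + Z * X) - (Y * Z * Y - Y * X * Y)
      = (Z * Y + Z + Y) * (X * Y - (Y * X + X + Y))
          - (Y * Z - (Z * Y + Y + Z)) * (Y * X + X + Y) := by noncomm_ring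
    _ = 0 := by rw [r1, r2]; simp

private lemma key3 {R : Type*} [Ring R] (X Y Z : R)
    (r2 : Y * Z - (Z * Y + Y + Z) = 0) (r3 : X * Z - (Z * X - Z - X) = 0) :
    (Z * Y * X + Z * X) * Z - Z * (Z * Y * X + Z * X) = Z * X * Z - Z * Y * Z := by
  rw [← sub_eq_zero]
  calc (Z * Y * X + Z * X) * Z - Z * (Z * Y * X + Z * X) - (Z * X * Z - Z * Y * Z)
      = Z * (Y * Z - (Z * Y + Y + Z)) * X + Z * Y * (X * Z - (Z * X - Z - X)) := by
        noncomm_ring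
    _ = 0 := by rw [r2, r3]; simp

private lemma aux1 {R : Type*} [Ring R] (fv yv : R) :
    (-fv - yv) * yv - (yv * (-fv - yv) + (-fv - yv) + yv) = yv * fv - fv * yv + fv := by
  noncomm_ring

private lemma aux2 {R : Type*} [Ring R] (ev yv : R) :
    yv * (ev - yv) - ((ev - yv) * yv + yv + (ev - yv)) = yv * ev - ev * yv - ev := by
  noncomm_ring

private lemma aux3 {R : Type*} [Ring R] (ev fv hv yv : R) :
    (-fv - yv) * (ev - yv) - ((ev - yv) * (-fv - yv) - (ev - yv) - (-fv - yv))
      = (ev * fv - fv * ev - hv) - (yv * fv - fv * yv + fv)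
          - (yv * ev - ev * yv - ev) + (hv - (yv + yv)) := by
  noncomm_ring

theorem statement10 (hchar : (2 : F) ≠ 0) :
    (uz F * uy F * ux F + uz F * ux F) * ux F - ux F * (uz F * uy F * ux F + uz F * ux F)
        = ux F * uy F * ux F - ux F * uz F * ux F ∧
    (uz F * uy F * ux F + uz F * ux F) * uy F - uy F * (uz F * uy F * ux F + uz F * ux F)
        = uy F * uz F * uy F - uy F * ux F * uy F ∧
    (uz F * uy F * ux F + uz F * ux F) * uz F - uz F * (uz F * uy F * ux F + uz F * ux F)
        = uz F * ux F * uz F - uz F * uy F * uz F := by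
  have hhe : h F * e F - e F * h F = 2 * e F := by
    have := RingQuot.mkAlgHom_rel F (slRel.he (F := F))
    simpa [h, e, map_mul, map_sub, map_ofNat] using this
  have hhf : h F * f F - f F * h F = -(2 * f F) := by
    have := RingQuot.mkAlgHom_rel F (slRel.hf (F := F))
    simpa [h, f, map_mul, map_sub, map_neg, map_ofNat] using this
  have hef : e F * f F - f F * e F = h F := by
    have := RingQuot.mkAlgHom_rel F (slRel.ef (F := F))
    simpa [h, e, f, map_mul, map_sub] using this
  obtain ⟨Yv, hYv⟩ : ∃ v : U F, v = (2 : F)⁻¹ • h F := ⟨_, rfl⟩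
  have h2 : ∀ u : U F, (2 : F)⁻¹ • ((2 : F) • u) = u := fun u => by
    rw [smul_smul, inv_mul_cancel₀ hchar, one_smul]
  have hcast : ∀ u : U F, (2 : U F) * u = (2 : F) • u := fun u => by
    rw [two_smul, two_mul]
  have d_ye : Yv * e F - e F * Yv - e F = 0 := by
    have h1 : Yv * e F - e F * Yv = (2 : F)⁻¹ • (h F * e F - e F * h F) := by
      rw [hYv, smul_sub, smul_mul_assoc, mul_smul_comm]
    rw [h1, hhe, hcast, h2, sub_self]
  have d_yf : Yv * f F - f F * Yv + f F = 0 := by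
    have h1 : Yv * f F - f F * Yv = (2 : F)⁻¹ • (h F * f F - f F * h F) := by
      rw [hYv, smul_sub, smul_mul_assoc, mul_smul_comm]
    rw [h1, hhf, smul_neg, hcast, h2, neg_add_cancel]
  have d_h : h F - (Yv + Yv) = 0 := by
    rw [hYv, ← two_smul F, smul_smul, mul_inv_cancel₀ hchar, one_smul, sub_self]
  have d_ef : e F * f F - f F * e F - h F = 0 := by rw [hef, sub_self]
  have hux : ux F = -f F - Yv := by rw [hYv]; rfl
  have huy : uy F = Yv := by rw [hYv]; rfl
  have huz : uz F = e F - Yv := by rw [hYv]; rfl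
  have r1 : ux F * uy F - (uy F * ux F + ux F + uy F) = 0 := by
    rw [hux, huy, aux1, d_yf]
  have r2 : uy F * uz F - (uz F * uy F + uy F + uz F) = 0 := by
    rw [huy, huz, aux2, d_ye]
  have r3 : ux F * uz F - (uz F * ux F - uz F - ux F) = 0 := by
    rw [hux, huz, aux3 (hv := h F), d_ef, d_yf, d_ye, d_h]
    simp
  exact ⟨key1 _ _ _ r1 r3, key2 _ _ _ r1 r2, key3 _ _ _ r2 r3⟩

end RacahPaper
end
end

section
/- The following equations hold in U(sl₂): [w, xy] = yzxy − xyzx + xyx − yxy, [w, yz] = zxyz − yzxy + yzy − zyz, and [w, zx] = xyzx − zxyz + zxz − xzx. -/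
open scoped TensorProduct

noncomputable section

namespace RacahPaper

variable (F : Type) [Field F]

section EquitableRing

variable {R : Type*} [Ring R]

theorem mul_mul_eq_of_mul_eq {a b c : R} (hab : a * b = c) (t : R) : a * (b * t) = c * t := by
  rw [← mul_assoc, hab]

theorem equitable_relations_of_sl2_relations (h2 : IsUnit (2 : R)) {e f h x y z : R}
    (hhe : h * e - e * h = 2 * e) (hhf : h * f - f * h = -(2 * f)) (hef : e * f - f * e = h)
    (he : e = z + y) (hf : f = -(x + y)) (hh : h = 2 * y) :
    x * y - y * x = x + y ∧ y * z - z * y = y + z ∧ z * x - x * z = z + x := by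
  subst he hf hh
  have hxy : x * y - y * x = x + y :=
    h2.mul_left_cancel (by convert hhf using 1 <;> noncomm_ring)
  have hyz : y * z - z * y = y + z :=
    h2.mul_left_cancel (by convert hhe using 1 <;> noncomm_ring)
  refine ⟨hxy, hyz, ?_⟩
  calc z * x - x * z
      = (x * y - y * x) + (y * z - z * y) - ((z + y) * -(x + y) - -(x + y) * (z + y)) := by
        noncomm_ring
    _ = z + x := by rw [hxy, hyz, hef]; noncomm_ring

/-! The equitable relations, read as the rewriting rules `yx ↦ xy - x - y`, `zy ↦ yz - y - z`,
`zx ↦ xz + x + z`, bring both sides of each identity below to the same PBW normal form. -/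

theorem equitable_w_rotate {x y z : R} (hxy : x * y - y * x = x + y)
    (hyz : y * z - z * y = y + z) (hzx : z * x - x * z = z + x) :
    z * y * x + z * x = x * z * y + x * y := by
  have hyx : y * x = x * y - x - y := by rw [sub_sub, ← hxy, sub_sub_cancel]
  have hzy : z * y = y * z - y - z := by rw [sub_sub, ← hyz, sub_sub_cancel]
  have hzx' : z * x = x * z + x + z := by rw [add_assoc, add_comm x, ← hzx, add_sub_cancel]
  simp only [mul_assoc, mul_sub, sub_mul, mul_add, hyx, hzy, hzx', mul_mul_eq_of_mul_eq hyx]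
  abel

theorem equitable_w_commutator_xy {x y z : R} (hxy : x * y - y * x = x + y)
    (hyz : y * z - z * y = y + z) (hzx : z * x - x * z = z + x) :
    (z * y * x + z * x) * (x * y) - (x * y) * (z * y * x + z * x)
      = y * z * x * y - x * y * z * x + x * y * x - y * x * y := by
  have hyx : y * x = x * y - x - y := by rw [sub_sub, ← hxy, sub_sub_cancel]
  have hzy : z * y = y * z - y - z := by rw [sub_sub, ← hyz, sub_sub_cancel]
  have hzx' : z * x = x * z + x + z := by rw [add_assoc, add_comm x, ← hzx, add_sub_cancel]
  simp only [mul_assoc, mul_sub, sub_mul, mul_add, add_mul, hyx, hzy, hzx',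
    mul_mul_eq_of_mul_eq hyx, mul_mul_eq_of_mul_eq hzx']
  abel

end EquitableRing

theorem e_eq_uz_add_uy : e F = uz F + uy F := by
  rw [uz, uy, sub_add_cancel]

theorem f_eq_neg_ux_add_uy : f F = -(ux F + uy F) := by
  rw [ux, uy, sub_add_cancel, neg_neg]

theorem h_eq_two_mul_uy {F : Type} [Field F] (hchar : (2 : F) ≠ 0) : h F = 2 * uy F := by
  rw [uy, two_mul, ← add_smul, ← two_mul, mul_inv_cancel₀ hchar, one_smul]

theorem isUnit_two_U {F : Type} [Field F] (hchar : (2 : F) ≠ 0) : IsUnit (2 : U F) := by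
  simpa only [map_ofNat] using (isUnit_iff_ne_zero.mpr hchar).map (algebraMap F (U F))

theorem equitable_relations_U {F : Type} [Field F] (hchar : (2 : F) ≠ 0) :
    ux F * uy F - uy F * ux F = ux F + uy F ∧ uy F * uz F - uz F * uy F = uy F + uz F ∧
      uz F * ux F - ux F * uz F = uz F + ux F :=
  equitable_relations_of_sl2_relations (isUnit_two_U hchar) (h_mul_e_sub_e_mul_h F) (h_mul_f_sub_f_mul_h F)
    (e_mul_f_sub_f_mul_e F) (e_eq_uz_add_uy F) (f_eq_neg_ux_add_uy F) (h_eq_two_mul_uy hchar)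

theorem statement11 (hchar : (2 : F) ≠ 0) :
    (uz F * uy F * ux F + uz F * ux F) * (ux F * uy F)
        - (ux F * uy F) * (uz F * uy F * ux F + uz F * ux F)
      = uy F * uz F * ux F * uy F - ux F * uy F * uz F * ux F
        + ux F * uy F * ux F - uy F * ux F * uy F ∧
    (uz F * uy F * ux F + uz F * ux F) * (uy F * uz F)
        - (uy F * uz F) * (uz F * uy F * ux F + uz F * ux F)
      = uz F * ux F * uy F * uz F - uy F * uz F * ux F * uy F
        + uy F * uz F * uy F - uz F * uy F * uz F ∧
    (uz F * uy F * ux F + uz F * ux F) * (uz F * ux F)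
        - (uz F * ux F) * (uz F * uy F * ux F + uz F * ux F)
      = ux F * uy F * uz F * ux F - uz F * ux F * uy F * uz F
        + uz F * ux F * uz F - ux F * uz F * ux F := by
  obtain ⟨hxy, hyz, hzx⟩ := equitable_relations_U hchar
  -- `w` is invariant under the cyclic permutation `x ↦ y ↦ z ↦ x` of the equitable relations
  have hw₁ := equitable_w_rotate hxy hyz hzx
  have hw₂ := equitable_w_rotate hyz hzx hxy
  refine ⟨equitable_w_commutator_xy hxy hyz hzx, ?_, ?_⟩
  · rw [hw₁]
    exact equitable_w_commutator_xy hyz hzx hxy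
  · rw [hw₁, hw₂]
    exact equitable_w_commutator_xy hzx hxy hyz

end RacahPaper
end
end

section
/- The following equations hold in U(sl₂): [xy, yz] = 2xyz + y² − xz, [yz, zx] = 2yzx + z² − yx, and [zx, xy] = 2zxy + x² − zy. -/
open scoped TensorProduct

noncomputable section

namespace RacahPaper

variable (F : Type) [Field F]

/-!
With `y = h/2` the defining relations of `U(sl₂)` read `[y,e] = e`, `[y,f] = -f`, `[e,f] = 2y`,
and the equitable relations `[x,y] = x + y`, `[y,z] = y + z`, `[z,x] = z + x` are linear
consequences of these. The three identities follow from the equitable relations alone, in any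
ring; since those relations are invariant under the rotation `x ↦ y ↦ z ↦ x`, it suffices to
prove the first identity.
-/

structure IsEquitableTriple {R : Type*} [Ring R] (x y z : R) : Prop where
  comm_xy : x * y - y * x = x + y
  comm_yz : y * z - z * y = y + z
  comm_zx : z * x - x * z = z + x

namespace IsEquitableTriple

variable {R : Type*} [Ring R] {x y z : R}

theorem rotate (t : IsEquitableTriple x y z) : IsEquitableTriple y z x :=
  ⟨t.comm_yz, t.comm_zx, t.comm_xy⟩

/-- Expand `y (z x) y = y (x z + z + x) y`, then reorder `y x` and `z y`. -/
theorem commutator_mul_mul (t : IsEquitableTriple x y z) :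
    x * y * (y * z) - y * z * (x * y) = 2 * (x * y * z) + y ^ 2 - x * z := by
  linear_combination (norm := noncomm_ring)
    (x * y - x) * t.comm_yz + t.comm_xy * (z * y + y) - y * t.comm_zx * y

end IsEquitableTriple

theorem isEquitableTriple_of_sl2 {R : Type*} [Ring R] {e f y : R}
    (hye : y * e - e * y = e) (hyf : y * f - f * y = -f) (hef : e * f - f * e = 2 * y) :
    IsEquitableTriple (-f - y) y (e - y) where
  comm_xy := by linear_combination (norm := noncomm_ring) hyf
  comm_yz := by linear_combination (norm := noncomm_ring) hye
  comm_zx := by linear_combination (norm := noncomm_ring) hye + hyf - hef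

section HalfSMul

variable {F} {A : Type*} [Ring A] [Algebra F A]

theorem two_mul_inv_two_smul (hchar : (2 : F) ≠ 0) (a : A) : 2 * ((2 : F)⁻¹ • a) = a := by
  rw [two_mul, ← two_smul F, smul_smul, mul_inv_cancel₀ hchar, one_smul]

theorem inv_two_smul_mul_sub_mul_inv_two_smul (hchar : (2 : F) ≠ 0) {a b c : A}
    (habc : a * b - b * a = 2 * c) : (2 : F)⁻¹ • a * b - b * (2 : F)⁻¹ • a = c := by
  rw [smul_mul_assoc, mul_smul_comm, ← smul_sub, habc, ← mul_smul_comm,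
    two_mul_inv_two_smul hchar]

end HalfSMul

theorem isEquitableTriple_ux_uy_uz (hchar : (2 : F) ≠ 0) :
    IsEquitableTriple (ux F) (uy F) (uz F) :=
  isEquitableTriple_of_sl2
    (inv_two_smul_mul_sub_mul_inv_two_smul hchar (h_mul_e_sub_e_mul_h F))
    (inv_two_smul_mul_sub_mul_inv_two_smul hchar
      ((h_mul_f_sub_f_mul_h F).trans (mul_neg 2 (f F)).symm))
    ((e_mul_f_sub_f_mul_e F).trans (two_mul_inv_two_smul hchar (h F)).symm)

theorem statement12 (hchar : (2 : F) ≠ 0) :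
    (ux F * uy F) * (uy F * uz F) - (uy F * uz F) * (ux F * uy F)
        = 2 * (ux F * uy F * uz F) + uy F ^ 2 - ux F * uz F ∧
    (uy F * uz F) * (uz F * ux F) - (uz F * ux F) * (uy F * uz F)
        = 2 * (uy F * uz F * ux F) + uz F ^ 2 - uy F * ux F ∧
    (uz F * ux F) * (ux F * uy F) - (ux F * uy F) * (uz F * ux F)
        = 2 * (uz F * ux F * uy F) + ux F ^ 2 - uz F * uy F := by
  have t := isEquitableTriple_ux_uy_uz F hchar
  exact ⟨t.commutator_mul_mul, t.rotate.commutator_mul_mul, t.rotate.rotate.commutator_mul_mul⟩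

end RacahPaper
end
end

section
/- The following equations hold in F[a,b,c] ⊗ U(sl₂): A♮ = (1⊗y + a⊗1)(1⊗y + (a+1)⊗1) + 2⊗yν_x + 2(c+a−b+1)⊗ν_x, and B♮ = (1⊗y − b⊗1)(1⊗y − (b+1)⊗1) − 2⊗yν_z − 2(a−b−c−1)⊗ν_z. -/
open scoped TensorProduct

noncomputable section

namespace RacahPaper

variable (F : Type) [Field F]

/-! Substituting `x = -2ν_x - y` and `z = 2ν_z - y`, both sides become expressions in `1 ⊗ y`,
`1 ⊗ ν` and scalars from `F[a,b,c]`, where `F[a,b,c] ⊗ U(sl₂)` is viewed as an `F[a,b,c]`-algebra.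
The identity for `B♮` is then formal; the one for `A♮` needs in addition `ν_x y = y ν_x + ν_x`,
which is the relation `fh = hf + 2f`. -/

section

variable {R A : Type*} [CommRing R] [Ring A] [Algebra R A]

theorem anat_form_eq (a b c : R) {y ν : A} (hνy : ν * y = y * ν + ν) :
    (a * (a + 1)) • (1 : A) + (b - c - a) • (-(2 * ν) - y) + (a + b - c + 1) • y
        - (-(2 * ν) - y) * y
      = (y + a • 1) * (y + (a + 1) • 1) + (2 : R) • (y * ν) + (2 * (c + a - b + 1)) • ν := by
  simp only [mul_add, add_mul, sub_mul, neg_mul, two_mul, hνy, smul_mul_assoc, mul_smul_comm,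
    one_mul, mul_one]
  module

theorem bnat_form_eq (a b c : R) (y ν : A) :
    (b * (b + 1)) • (1 : A) + (c - a - b) • y + (b + c - a + 1) • (2 * ν - y)
        - y * (2 * ν - y)
      = (y - b • 1) * (y - (b + 1) • 1) - (2 : R) • (y * ν) - (2 * (a - b - c - 1)) • ν := by
  simp only [mul_add, sub_mul, mul_sub, two_mul, smul_mul_assoc, mul_smul_comm, one_mul, mul_one]
  module

end

theorem tmul_eq_smul_includeRight {R S B : Type*} [CommSemiring R] [CommSemiring S] [Algebra R S]
    [Semiring B] [Algebra R B] (s : S) (b : B) :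
    s ⊗ₜ[R] b = s • Algebra.TensorProduct.includeRight b :=
  TensorProduct.tmul_eq_smul_one_tmul s b

lemma f_mul_h : f F * h F = h F * f F + 2 * f F := by
  have hf : h F * f F - f F * h F = -(2 * f F) := by
    simpa [f, h, map_ofNat] using RingQuot.mkAlgHom_rel F (slRel.hf (F := F))
  calc f F * h F = h F * f F - (h F * f F - f F * h F) := by abel
    _ = h F * f F + 2 * f F := by rw [hf, sub_neg_eq_add]

section

variable {F}

lemma nux_mul_uy (h2 : (2 : F) ≠ 0) : nux F * uy F = uy F * nux F + nux F := by
  simp only [nux, uy, smul_mul_smul_comm, f_mul_h, two_mul, ← two_smul F]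
  match_scalars <;> field_simp

lemma ux_eq_neg_two_mul_nux_sub_uy (h2 : (2 : F) ≠ 0) : ux F = -(2 * nux F) - uy F := by
  rw [ux, uy, nux, mul_smul_comm, two_mul, ← two_smul F, smul_smul, inv_mul_cancel₀ h2, one_smul]

lemma uz_eq_two_mul_nuz_sub_uy (h2 : (2 : F) ≠ 0) : uz F = 2 * nuz F - uy F := by
  rw [uz, uy, nuz, mul_smul_comm, two_mul, ← two_smul F, smul_smul, inv_mul_cancel₀ h2, one_smul]

end

theorem statement13 (hchar : (2 : F) ≠ 0) :
    Anat F =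
      ((1 : P F) ⊗ₜ[F] uy F + pa F ⊗ₜ[F] (1 : U F)) *
          ((1 : P F) ⊗ₜ[F] uy F + (pa F + 1) ⊗ₜ[F] (1 : U F))
        + (2 : P F) ⊗ₜ[F] (uy F * nux F)
        + (2 * (pc F + pa F - pb F + 1)) ⊗ₜ[F] nux F ∧
    Bnat F =
      ((1 : P F) ⊗ₜ[F] uy F - pb F ⊗ₜ[F] (1 : U F)) *
          ((1 : P F) ⊗ₜ[F] uy F - (pb F + 1) ⊗ₜ[F] (1 : U F))
        - (2 : P F) ⊗ₜ[F] (uy F * nuz F)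
        - (2 * (pa F - pb F - pc F - 1)) ⊗ₜ[F] nuz F := by
  have hνy := congrArg (Algebra.TensorProduct.includeRight (R := F) (A := P F)) (nux_mul_uy hchar)
  rw [map_mul, map_add, map_mul] at hνy
  constructor
  · simpa only [Anat, tmul_eq_smul_includeRight, ux_eq_neg_two_mul_nux_sub_uy hchar, map_mul,
      map_sub, map_neg, map_one, map_ofNat, one_smul] using
      anat_form_eq (pa F) (pb F) (pc F) hνy
  · simpa only [Bnat, tmul_eq_smul_includeRight, uz_eq_two_mul_nuz_sub_uy hchar, map_mul,
      map_sub, map_neg, map_one, map_ofNat, one_smul] using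
      bnat_form_eq (pa F) (pb F) (pc F) _ _

end RacahPaper
end
end

section
/- The following equations hold in F[a,b,c] ⊗ U(sl₂): [R, θ] = R, [R, ϑ] = R, [θ, L] = L, [ϑ, L] = L; equivalently θR = R(θ − 1⊗1), ϑR = R(ϑ − 1⊗1), θL = L(θ + 1⊗1), and ϑL = L(ϑ + 1⊗1). -/
open scoped TensorProduct

noncomputable section

theorem inv_mul_inv_mul_self {G₀ : Type*} [GroupWithZero G₀] (a : G₀) : a⁻¹ * a⁻¹ * a = a⁻¹ := by
  simpa using mul_self_mul_inv a⁻¹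

theorem mul_mul_eq_mul_mul_add {A : Type*} [Ring A] {y x c z k : A}
    (hx : y * x = x * (y + k)) (hc : Commute c y) (hz : Commute z (c * x)) :
    (y + z) * (c * x) = c * x * (y + z + k) := by
  rw [add_mul, ← mul_assoc, ← hc.eq, mul_assoc, hx, hz.eq]
  noncomm_ring

namespace Algebra.TensorProduct

theorem commute_tmul_one {R A B : Type*} [CommSemiring R] [CommSemiring A] [Algebra R A]
    [Semiring B] [Algebra R B] (a : A) (t : A ⊗[R] B) : Commute (a ⊗ₜ[R] (1 : B)) t := by
  simpa using Algebra.commute_algebraMap_left (R := A) a t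

theorem one_tmul_mul_tmul_of_mul_eq {R A B : Type*} [CommSemiring R] [Semiring A] [Algebra R A]
    [Semiring B] [Algebra R B] (a : A) {u v w : B} (huv : u * v = v * w) :
    ((1 : A) ⊗ₜ[R] u) * (a ⊗ₜ[R] v) = (a ⊗ₜ[R] v) * ((1 : A) ⊗ₜ[R] w) := by
  simp only [tmul_mul_tmul, one_mul, mul_one, huv]

end Algebra.TensorProduct

namespace RacahPaper

open Algebra.TensorProduct

variable (F : Type) [Field F]

theorem h_mul_f : h F * f F = f F * h F - 2 * f F := by
  have := RingQuot.mkAlgHom_rel F (slRel.hf (F := F))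
  simp only [map_sub, map_mul, map_neg, map_ofNat] at this
  rw [← h, ← f] at this
  linear_combination (norm := noncomm_ring) this

theorem h_mul_e : h F * e F = e F * h F + 2 * e F := by
  have := RingQuot.mkAlgHom_rel F (slRel.he (F := F))
  simp only [map_sub, map_mul, map_ofNat] at this
  rw [← h, ← e] at this
  linear_combination (norm := noncomm_ring) this

theorem uy_mul_nux : uy F * nux F = nux F * (uy F - 1) := by
  simp only [uy, nux, smul_mul_smul, mul_sub, h_mul_f, mul_one, two_mul]
  match_scalars
  · ring
  · linear_combination -inv_mul_inv_mul_self (2 : F)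

theorem uy_mul_nuz : uy F * nuz F = nuz F * (uy F + 1) := by
  simp only [uy, nuz, smul_mul_smul, mul_add, h_mul_e, mul_one, two_mul]
  match_scalars
  · ring
  · linear_combination inv_mul_inv_mul_self (2 : F)

theorem Rel_eq : Rel F =
    ((1 : P F) ⊗ₜ[F] uy F + (pc F + pa F - pb F + 1) ⊗ₜ[F] (1 : U F)) *
      ((2 : P F) ⊗ₜ[F] nux F) := by
  rw [Rel, add_mul, tmul_mul_tmul, tmul_mul_tmul, one_mul, one_mul, mul_comm _ (2 : P F)]

theorem Lel_eq : Lel F =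
    ((1 : P F) ⊗ₜ[F] uy F + (pa F - pb F - pc F - 1) ⊗ₜ[F] (1 : U F)) *
      ((-2 : P F) ⊗ₜ[F] nuz F) := by
  rw [Lel, add_mul, tmul_mul_tmul, tmul_mul_tmul, one_mul, one_mul, mul_neg,
    TensorProduct.neg_tmul, TensorProduct.neg_tmul, mul_comm _ (2 : P F), sub_eq_add_neg]

theorem theta_eq : theta F = (1 : P F) ⊗ₜ[F] uy F + (-pb F) ⊗ₜ[F] (1 : U F) := by
  rw [theta, sub_eq_add_neg, TensorProduct.neg_tmul]

theorem one_tmul_uy_add_tmul_one_mul_Rel (p : P F) :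
    ((1 : P F) ⊗ₜ[F] uy F + p ⊗ₜ[F] 1) * Rel F =
      Rel F * ((1 : P F) ⊗ₜ[F] uy F + p ⊗ₜ[F] 1 - 1) := by
  rw [Rel_eq, sub_eq_add_neg _ (1 : T F)]
  apply mul_mul_eq_mul_mul_add
  · rw [one_tmul_mul_tmul_of_mul_eq _ (uy_mul_nux F), TensorProduct.tmul_sub, ← one_def,
      sub_eq_add_neg]
  · exact (Commute.refl _).add_left (commute_tmul_one _ _)
  · exact commute_tmul_one p _

theorem one_tmul_uy_add_tmul_one_mul_Lel (p : P F) :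
    ((1 : P F) ⊗ₜ[F] uy F + p ⊗ₜ[F] 1) * Lel F =
      Lel F * ((1 : P F) ⊗ₜ[F] uy F + p ⊗ₜ[F] 1 + 1) := by
  rw [Lel_eq]
  apply mul_mul_eq_mul_mul_add
  · rw [one_tmul_mul_tmul_of_mul_eq _ (uy_mul_nuz F), TensorProduct.tmul_add, ← one_def]
  · exact (Commute.refl _).add_left (commute_tmul_one _ _)
  · exact commute_tmul_one p _

theorem statement15 :
    Rel F * theta F - theta F * Rel F = Rel F ∧
    Rel F * vartheta F - vartheta F * Rel F = Rel F ∧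
    theta F * Lel F - Lel F * theta F = Lel F ∧
    vartheta F * Lel F - Lel F * vartheta F = Lel F ∧
    theta F * Rel F = Rel F * (theta F - 1) ∧
    vartheta F * Rel F = Rel F * (vartheta F - 1) ∧
    theta F * Lel F = Lel F * (theta F + 1) ∧
    vartheta F * Lel F = Lel F * (vartheta F + 1) := by
  have hθR : theta F * Rel F = Rel F * (theta F - 1) := by
    rw [theta_eq]; exact one_tmul_uy_add_tmul_one_mul_Rel F _
  have hϑR : vartheta F * Rel F = Rel F * (vartheta F - 1) :=
    one_tmul_uy_add_tmul_one_mul_Rel F _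
  have hθL : theta F * Lel F = Lel F * (theta F + 1) := by
    rw [theta_eq]; exact one_tmul_uy_add_tmul_one_mul_Lel F _
  have hϑL : vartheta F * Lel F = Lel F * (vartheta F + 1) :=
    one_tmul_uy_add_tmul_one_mul_Lel F _
  refine ⟨?_, ?_, ?_, ?_, hθR, hϑR, hθL, hϑL⟩
  · rw [hθR, mul_sub, mul_one, sub_sub_cancel]
  · rw [hϑR, mul_sub, mul_one, sub_sub_cancel]
  · rw [hθL, mul_add, mul_one, add_sub_cancel_left]
  · rw [hϑL, mul_add, mul_one, add_sub_cancel_left]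

end RacahPaper
end
end
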